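/- Let λ ∈ [−1,1] and let f be continuous on I = [0,1]×[0,1]. Then for all n, m ≥ 2 and all (x,y) ∈ I, |B̄_{n,m}(f; x,y; λ) − f(x,y)| ≤ 4 ω( f; √(δ_n(x)), √(δ_m(y)) ), where δ_n(x) = B_{n,λ}((s−x)²; x) is the second central moment of the univariate λ-Bernstein operator at x, δ_m(y) = B_{m,λ}((t−y)²; y), and ω(f; δ₁, δ₂) = sup{ |f(s,t) − f(x,y)| : (s,t),(x,y) ∈ I, |s−x| ≤ δ₁, |t−y| ≤ δ₂ } is the complete modulus of continuity of the bivariate function f. -/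
import Mathlib


open Finset Filter

/-- Bernstein basis polynomial `b_{n,i}(x) = C(n,i) x^i (1-x)^(n-i)`. -/
noncomputable def bern (n i : ℕ) (x : ℝ) : ℝ :=
  (n.choose i : ℝ) * x ^ i * (1 - x) ^ (n - i)

/-- Bézier basis `b̃_{n,i}(λ; x)` with shape parameter `lam`. -/
noncomputable def bez (n : ℕ) (lam x : ℝ) (i : ℕ) : ℝ :=
  if i = 0 then bern n 0 x - lam / ((n : ℝ) + 1) * bern (n + 1) 1 x
  else if i = n then bern n n x - lam / ((n : ℝ) + 1) * bern (n + 1) n x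
  else bern n i x + lam * (((n : ℝ) - 2 * (i : ℝ) + 1) / ((n : ℝ) ^ 2 - 1) * bern (n + 1) i x
    - ((n : ℝ) - 2 * (i : ℝ) - 1) / ((n : ℝ) ^ 2 - 1) * bern (n + 1) (i + 1) x)

/-- The λ-Bernstein operator `B_{n,λ}(f; x) = ∑_{i=0}^n f(i/n) b̃_{n,i}(λ; x)`. -/
noncomputable def lB (n : ℕ) (lam : ℝ) (f : ℝ → ℝ) (x : ℝ) : ℝ :=
  ∑ i ∈ Finset.range (n + 1), f ((i : ℝ) / (n : ℝ)) * bez n lam x i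

/-- The bivariate λ-Bernstein operator
`B̄_{n,m}(f; x, y; λ) = ∑_{k₁=0}^n ∑_{k₂=0}^m f(k₁/n, k₂/m) b̃_{n,k₁}(λ;x) b̃_{m,k₂}(λ;y)`. -/
noncomputable def bivB (n m : ℕ) (lam : ℝ) (f : ℝ → ℝ → ℝ) (x y : ℝ) : ℝ :=
  ∑ k₁ ∈ Finset.range (n + 1), ∑ k₂ ∈ Finset.range (m + 1),
    f ((k₁ : ℝ) / (n : ℝ)) ((k₂ : ℝ) / (m : ℝ)) * bez n lam x k₁ * bez m lam y k₂

/-- Complete modulus of continuity of a bivariate function on `I = [0,1] × [0,1]`. -/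
noncomputable def bivMod (f : ℝ → ℝ → ℝ) (δ₁ δ₂ : ℝ) : ℝ :=
  sSup {r | ∃ s ∈ Set.Icc (0 : ℝ) 1, ∃ t ∈ Set.Icc (0 : ℝ) 1,
    ∃ x ∈ Set.Icc (0 : ℝ) 1, ∃ y ∈ Set.Icc (0 : ℝ) 1,
      |s - x| ≤ δ₁ ∧ |t - y| ≤ δ₂ ∧ r = |f s t - f x y|}

lemma bern_nonneg {n i : ℕ} {x : ℝ} (h0 : 0 ≤ x) (h1 : x ≤ 1) : 0 ≤ bern n i x := by
  have : 0 ≤ 1 - x := by linarith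
  unfold bern; positivity

lemma bern_sum (n : ℕ) (x : ℝ) : ∑ i ∈ Finset.range (n + 1), bern n i x = 1 := by
  have h := add_pow x (1 - x) n
  simp only [add_sub_cancel, one_pow] at h
  rw [eq_comm] at h
  rw [show (1:ℝ) = (x + (1-x))^n by ring_nf]
  rw [add_pow]
  apply Finset.sum_congr rfl
  intro i _
  unfold bern; ring

lemma bern_elev {n i : ℕ} (hi : i ≤ n) (x : ℝ) :
    bern n i x = (((n:ℝ)+1-i)/((n:ℝ)+1)) * bern (n+1) i x
      + (((i:ℝ)+1)/((n:ℝ)+1)) * bern (n+1) (i+1) x := by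
  have h1 : (n.choose i : ℝ) * ((n:ℝ)+1) = ((n+1).choose i : ℝ) * ((n:ℝ)+1-(i:ℝ)) := by
    have := Nat.choose_mul_succ_eq n i
    have hc : ((n:ℝ)+1-(i:ℝ)) = ((n+1-i : ℕ) : ℝ) := by
      have : i ≤ n + 1 := le_trans hi (Nat.le_succ n)
      push_cast [Nat.cast_sub this]; ring
    rw [hc]
    exact_mod_cast this
  have h2 : ((n:ℝ)+1) * (n.choose i : ℝ) = ((n+1).choose (i+1) : ℝ) * ((i:ℝ)+1) := by
    have := Nat.add_one_mul_choose_eq n i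
    exact_mod_cast this
  have hsub : n + 1 - i = (n - i) + 1 := by omega
  have hsub2 : n + 1 - (i+1) = n - i := by omega
  unfold bern
  rw [hsub, hsub2]
  have hn1 : ((n:ℝ)+1) ≠ 0 := by positivity
  field_simp
  linear_combination (x^i*(1-x)^(n-i+1)) * h1 + (x^(i+1)*(1-x)^(n-i)) * h2

lemma bez_zero (n : ℕ) (lam x : ℝ) :
    bez n lam x 0 = bern n 0 x - lam / ((n : ℝ) + 1) * bern (n + 1) 1 x := by
  simp [bez]

lemma bez_top {n : ℕ} (hn : n ≠ 0) (lam x : ℝ) :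
    bez n lam x n = bern n n x - lam / ((n : ℝ) + 1) * bern (n + 1) n x := by
  simp [bez, hn]

lemma bez_mid {n i : ℕ} (h0 : i ≠ 0) (hn : i ≠ n) (lam x : ℝ) :
    bez n lam x i = bern n i x
      + lam * (((n : ℝ) - 2 * (i : ℝ) + 1) / ((n : ℝ) ^ 2 - 1) * bern (n + 1) i x
        - ((n : ℝ) - 2 * (i : ℝ) - 1) / ((n : ℝ) ^ 2 - 1) * bern (n + 1) (i + 1) x) := by
  simp [bez, h0, hn]

set_option maxHeartbeats 1000000 in
lemma bez_nonneg {n : ℕ} {lam x : ℝ} (hn : 2 ≤ n) (hl1 : -1 ≤ lam) (hl2 : lam ≤ 1)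
    (h0 : 0 ≤ x) (h1 : x ≤ 1) {i : ℕ} (hi : i ≤ n) : 0 ≤ bez n lam x i := by
  have hn1 : (0:ℝ) < (n:ℝ) + 1 := by positivity
  have hnn : (2:ℝ) ≤ (n:ℝ) := by exact_mod_cast hn
  have b1 := bern_nonneg (n := n+1) (i := i) h0 h1
  have b2 := bern_nonneg (n := n+1) (i := i+1) h0 h1
  rcases eq_or_ne i 0 with rfl | hi0
  · rw [bez_zero, bern_elev (Nat.zero_le n) x]
    have h2 : (((n:ℝ)+1-((0:ℕ):ℝ))/((n:ℝ)+1)) * bern (n+1) 0 x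
        + ((((0:ℕ):ℝ)+1)/((n:ℝ)+1)) * bern (n+1) (0+1) x
        - lam/((n:ℝ)+1) * bern (n+1) 1 x
        = bern (n+1) 0 x + (1-lam)/((n:ℝ)+1) * bern (n+1) 1 x := by
      push_cast
      field_simp
      ring
    rw [h2]
    have hc : 0 ≤ (1-lam)/((n:ℝ)+1) := div_nonneg (by linarith) (by linarith)
    have bb1 := bern_nonneg (n := n+1) (i := 1) h0 h1
    nlinarith [b1]
  · rcases eq_or_ne i n with rfl | hin
    · rw [bez_top hi0, bern_elev (le_refl i) x]
      have hi1 : ((i:ℝ)+1) ≠ 0 := by positivity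
      have h2 : (((i:ℝ)+1-(i:ℝ))/((i:ℝ)+1)) * bern (i+1) i x
          + (((i:ℝ)+1)/((i:ℝ)+1)) * bern (i+1) (i+1) x
          - lam/((i:ℝ)+1) * bern (i+1) i x
          = bern (i+1) (i+1) x + (1-lam)/((i:ℝ)+1) * bern (i+1) i x := by
        field_simp
        ring
      rw [h2]
      have hc : 0 ≤ (1-lam)/((i:ℝ)+1) := div_nonneg (by linarith) (by positivity)
      nlinarith [b1, b2]
    · rw [bez_mid hi0 hin, bern_elev hi x]
      have h1i : 1 ≤ i := Nat.one_le_iff_ne_zero.mpr hi0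
      have hiR : (1:ℝ) ≤ (i:ℝ) := by exact_mod_cast h1i
      have hiR2 : (i:ℝ) ≤ (n:ℝ) - 1 := by
        have : (i:ℝ) + 1 ≤ (n:ℝ) := by exact_mod_cast Nat.succ_le_of_lt (lt_of_le_of_ne hi hin)
        linarith
      have hden : (0:ℝ) < (n:ℝ)^2 - 1 := by nlinarith
      have hne : ((n:ℝ)^2-1) ≠ 0 := ne_of_gt hden
      have hne2 : ((n:ℝ)+1) ≠ 0 := ne_of_gt hn1
      have e1 : ((n:ℝ)+1-(i:ℝ))/((n:ℝ)+1) = (((n:ℝ)+1-(i:ℝ))*((n:ℝ)-1))/((n:ℝ)^2-1) := by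
        rw [div_eq_div_iff hne2 hne]; ring
      have e2 : ((i:ℝ)+1)/((n:ℝ)+1) = (((i:ℝ)+1)*((n:ℝ)-1))/((n:ℝ)^2-1) := by
        rw [div_eq_div_iff hne2 hne]; ring
      rw [e1, e2]
      have hgoal : (((n:ℝ)+1-(i:ℝ))*((n:ℝ)-1))/((n:ℝ)^2-1) * bern (n+1) i x
          + (((i:ℝ)+1)*((n:ℝ)-1))/((n:ℝ)^2-1) * bern (n+1) (i+1) x
          + lam * (((n:ℝ) - 2*(i:ℝ) + 1)/((n:ℝ)^2-1) * bern (n+1) i x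
            - ((n:ℝ) - 2*(i:ℝ) - 1)/((n:ℝ)^2-1) * bern (n+1) (i+1) x)
          = ((((n:ℝ)+1-(i:ℝ))*((n:ℝ)-1) + lam*((n:ℝ) - 2*(i:ℝ) + 1))/((n:ℝ)^2-1)) * bern (n+1) i x
          + ((((i:ℝ)+1)*((n:ℝ)-1) - lam*((n:ℝ) - 2*(i:ℝ) - 1))/((n:ℝ)^2-1)) * bern (n+1) (i+1) x := by
        field_simp
        ring
      rw [hgoal]
      have hla : -((n:ℝ)-1) ≤ lam * ((n:ℝ) - 2*(i:ℝ) + 1) := by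
        rcases le_or_gt 0 ((n:ℝ) - 2*(i:ℝ) + 1) with h | h
        · nlinarith
        · nlinarith
      have hla' : lam * ((n:ℝ) - 2*(i:ℝ) - 1) ≤ (n:ℝ)-1 := by
        rcases le_or_gt 0 ((n:ℝ) - 2*(i:ℝ) - 1) with h | h
        · nlinarith
        · nlinarith
      have hc1 : 0 ≤ (((n:ℝ)+1-(i:ℝ))*((n:ℝ)-1) + lam*((n:ℝ) - 2*(i:ℝ) + 1))/((n:ℝ)^2-1) := by
        apply div_nonneg _ (le_of_lt hden)
        nlinarith [hla, mul_nonneg (show (0:ℝ) ≤ (n:ℝ)-(i:ℝ) by linarith) (show (0:ℝ) ≤ (n:ℝ)-1 by linarith)]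
      have hc2 : 0 ≤ (((i:ℝ)+1)*((n:ℝ)-1) - lam*((n:ℝ) - 2*(i:ℝ) - 1))/((n:ℝ)^2-1) := by
        apply div_nonneg _ (le_of_lt hden)
        nlinarith [hla', mul_nonneg (show (0:ℝ) ≤ (i:ℝ) by linarith) (show (0:ℝ) ≤ (n:ℝ)-1 by linarith)]
      exact add_nonneg (mul_nonneg hc1 b1) (mul_nonneg hc2 b2)

lemma bez_sum {n : ℕ} (hn : 2 ≤ n) (lam x : ℝ) :
    ∑ i ∈ Finset.range (n + 1), bez n lam x i = 1 := by
  have hnn : (2:ℝ) ≤ (n:ℝ) := by exact_mod_cast hn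
  have hden : ((n:ℝ)^2-1) ≠ 0 := by nlinarith
  have hne2 : ((n:ℝ)+1) ≠ 0 := by positivity
  set u : ℕ → ℝ := fun i =>
    if i = 0 ∨ i = n + 1 then 0
    else ((n:ℝ) - 2*(i:ℝ) + 1)/((n:ℝ)^2-1) * bern (n+1) i x with hu
  have hu0 : u 0 = 0 := by simp [hu]
  have hutop : u (n+1) = 0 := by simp [hu]
  have huj : ∀ j, j ≠ 0 → j ≠ n+1 →
      u j = ((n:ℝ) - 2*(j:ℝ) + 1)/((n:ℝ)^2-1) * bern (n+1) j x := by
    intro j hj1 hj2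
    simp [hu, hj1, hj2]
  have key : ∀ i ∈ Finset.range (n+1), bez n lam x i = bern n i x + lam * (u i - u (i+1)) := by
    intro i hi
    rw [Finset.mem_range] at hi
    have hi' : i ≤ n := Nat.lt_succ_iff.mp hi
    rcases eq_or_ne i 0 with rfl | hi0
    · rw [bez_zero, hu0, huj 1 (by omega) (by omega)]
      have : ((n:ℝ) - 2*((1:ℕ):ℝ) + 1)/((n:ℝ)^2-1) = 1/((n:ℝ)+1) := by
        rw [div_eq_div_iff hden hne2]; push_cast; ring
      rw [this]
      ring
    · rcases eq_or_ne i n with rfl | hin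
      · rw [bez_top hi0, hutop, huj i hi0 (by omega)]
        have : ((i:ℝ) - 2*(i:ℝ) + 1)/((i:ℝ)^2-1) = (-1)/((i:ℝ)+1) := by
          rw [div_eq_div_iff hden hne2]; ring
        rw [this]
        ring
      · rw [bez_mid hi0 hin, huj i hi0 (by omega), huj (i+1) (by omega) (by omega)]
        push_cast
        ring
  rw [Finset.sum_congr rfl key, Finset.sum_add_distrib, bern_sum, ← Finset.mul_sum,
    Finset.sum_range_sub' u]
  rw [hu0, hutop]
  ring

/-- One-step modulus bound. -/
lemma bivMod_step {f : ℝ → ℝ → ℝ} {δ₁ δ₂ : ℝ}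
    (hBdd : BddAbove {r | ∃ s ∈ Set.Icc (0 : ℝ) 1, ∃ t ∈ Set.Icc (0 : ℝ) 1,
      ∃ x ∈ Set.Icc (0 : ℝ) 1, ∃ y ∈ Set.Icc (0 : ℝ) 1,
        |s - x| ≤ δ₁ ∧ |t - y| ≤ δ₂ ∧ r = |f s t - f x y|})
    {s t x y : ℝ} (hs : s ∈ Set.Icc (0:ℝ) 1) (ht : t ∈ Set.Icc (0:ℝ) 1)
    (hx : x ∈ Set.Icc (0:ℝ) 1) (hy : y ∈ Set.Icc (0:ℝ) 1)
    (h1 : |s - x| ≤ δ₁) (h2 : |t - y| ≤ δ₂) :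
    |f s t - f x y| ≤ bivMod f δ₁ δ₂ :=
  le_csSup hBdd ⟨s, hs, t, ht, x, hx, y, hy, h1, h2, rfl⟩

set_option maxHeartbeats 2000000 in
/-- rate of convergence of the bivariate λ-Bernstein operators via the
complete modulus of continuity, where `δ_n(x) = B_{n,λ}((s-x)²; x)` and
`δ_m(y) = B_{m,λ}((t-y)²; y)` are the univariate second central moments. -/
theorem bivB_rate_of_convergence (lam : ℝ) (hlam : lam ∈ Set.Icc (-1 : ℝ) 1)
    (f : ℝ → ℝ → ℝ)
    (hf : ContinuousOn (Function.uncurry f) (Set.Icc (0 : ℝ) 1 ×ˢ Set.Icc (0 : ℝ) 1))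
    (n m : ℕ) (hn : 2 ≤ n) (hm : 2 ≤ m) (x y : ℝ)
    (hx : x ∈ Set.Icc (0 : ℝ) 1) (hy : y ∈ Set.Icc (0 : ℝ) 1) :
    |bivB n m lam f x y - f x y| ≤
      4 * bivMod f (Real.sqrt (lB n lam (fun s => (s - x) ^ 2) x))
        (Real.sqrt (lB m lam (fun t => (t - y) ^ 2) y)) := by
  obtain ⟨hl1, hl2⟩ := hlam
  -- nonnegativity of the moments
  have hlBx : 0 ≤ lB n lam (fun s => (s - x) ^ 2) x := by
    apply Finset.sum_nonneg
    intro i hi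
    exact mul_nonneg (sq_nonneg _)
      (bez_nonneg hn hl1 hl2 hx.1 hx.2 (Nat.lt_succ_iff.mp (Finset.mem_range.mp hi)))
  have hlBy : 0 ≤ lB m lam (fun t => (t - y) ^ 2) y := by
    apply Finset.sum_nonneg
    intro i hi
    exact mul_nonneg (sq_nonneg _)
      (bez_nonneg hm hl1 hl2 hy.1 hy.2 (Nat.lt_succ_iff.mp (Finset.mem_range.mp hi)))
  set δ₁ := Real.sqrt (lB n lam (fun s => (s - x) ^ 2) x) with hδ₁def
  set δ₂ := Real.sqrt (lB m lam (fun t => (t - y) ^ 2) y) with hδ₂def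
  have hδ₁0 : 0 ≤ δ₁ := Real.sqrt_nonneg _
  have hδ₂0 : 0 ≤ δ₂ := Real.sqrt_nonneg _
  have hδ₁sq : δ₁ ^ 2 = lB n lam (fun s => (s - x) ^ 2) x := Real.sq_sqrt hlBx
  have hδ₂sq : δ₂ ^ 2 = lB m lam (fun t => (t - y) ^ 2) y := Real.sq_sqrt hlBy
  -- boundedness of f on the square
  obtain ⟨C, hC⟩ := (isCompact_Icc.prod isCompact_Icc).exists_bound_of_continuousOn hf
  have hBdd : BddAbove {r | ∃ s ∈ Set.Icc (0 : ℝ) 1, ∃ t ∈ Set.Icc (0 : ℝ) 1,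
      ∃ x ∈ Set.Icc (0 : ℝ) 1, ∃ y ∈ Set.Icc (0 : ℝ) 1,
        |s - x| ≤ δ₁ ∧ |t - y| ≤ δ₂ ∧ r = |f s t - f x y|} := by
    refine ⟨2 * C, ?_⟩
    rintro r ⟨s, hs, t, ht, x', hx', y', hy', _, _, rfl⟩
    have h1 := hC (s, t) (Set.mk_mem_prod hs ht)
    have h2 := hC (x', y') (Set.mk_mem_prod hx' hy')
    simp only [Function.uncurry_apply_pair, Real.norm_eq_abs] at h1 h2
    calc |f s t - f x' y'| ≤ |f s t| + |f x' y'| := abs_sub _ _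
      _ ≤ 2 * C := by linarith
  set ω := bivMod f δ₁ δ₂ with hωdef
  have hω0 : 0 ≤ ω := by
    have := bivMod_step hBdd hx hy hx hy (by simp [hδ₁0]) (by simp [hδ₂0])
    simpa using this
  -- chaining in the first variable
  have chain1 : ∀ k : ℕ, ∀ s x' t : ℝ, s ∈ Set.Icc (0:ℝ) 1 → x' ∈ Set.Icc (0:ℝ) 1 →
      t ∈ Set.Icc (0:ℝ) 1 → |s - x'| ≤ (k : ℝ) * δ₁ → |f s t - f x' t| ≤ (k : ℝ) * ω := by
    intro k
    induction k with
    | zero =>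
      intro s x' t _ _ _ h
      have : s = x' := by
        have : |s - x'| ≤ 0 := by simpa using h
        have := abs_nonneg (s - x')
        have h0 : |s - x'| = 0 := le_antisymm ‹|s - x'| ≤ 0› this
        have := abs_eq_zero.mp h0
        linarith [sub_eq_zero.mp this]
      simp [this]
    | succ k ih =>
      intro s x' t hs hx' ht h
      set c : ℝ := (k : ℝ) / ((k : ℝ) + 1) with hc
      have hk1 : (0:ℝ) < (k : ℝ) + 1 := by positivity
      have hc0 : 0 ≤ c := by positivity
      have hc1 : c ≤ 1 := by
        rw [hc, div_le_one hk1]; linarith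
      set x'' := x' + c * (s - x') with hx''
      have hx''mem : x'' ∈ Set.Icc (0:ℝ) 1 := by
        constructor
        · nlinarith [mul_nonneg (sub_nonneg.mpr hc1) hx'.1, mul_nonneg hc0 hs.1]
        · nlinarith [mul_nonneg (sub_nonneg.mpr hc1) (sub_nonneg.mpr hx'.2),
            mul_nonneg hc0 (sub_nonneg.mpr hs.2)]
      have habs : |s - x'| ≤ ((k:ℝ) + 1) * δ₁ := by push_cast at h; linarith
      have hstep : |s - x''| ≤ δ₁ := by
        have he : s - x'' = (s - x') / ((k:ℝ) + 1) := by
          rw [hx'', hc]; field_simp; ring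
        rw [he, abs_div, abs_of_pos hk1, div_le_iff₀ hk1]
        linarith
      have hih : |x'' - x'| ≤ (k:ℝ) * δ₁ := by
        have he : x'' - x' = c * (s - x') := by rw [hx'']; ring
        rw [he, abs_mul, abs_of_nonneg hc0, hc]
        rw [div_mul_eq_mul_div, div_le_iff₀ hk1]
        calc (k:ℝ) * |s - x'| ≤ (k:ℝ) * (((k:ℝ)+1) * δ₁) :=
          mul_le_mul_of_nonneg_left habs (Nat.cast_nonneg k)
        _ = (k:ℝ) * δ₁ * ((k:ℝ)+1) := by ring
      have e1 : |f s t - f x'' t| ≤ ω :=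
        bivMod_step hBdd hs ht hx''mem ht hstep (by simp [hδ₂0])
      have e2 : |f x'' t - f x' t| ≤ (k:ℝ) * ω := ih x'' x' t hx''mem hx' ht hih
      calc |f s t - f x' t| ≤ |f s t - f x'' t| + |f x'' t - f x' t| := abs_sub_le _ _ _
        _ ≤ ω + (k:ℝ) * ω := add_le_add e1 e2
        _ = ((k+1 : ℕ):ℝ) * ω := by push_cast; ring
  -- chaining in the second variable
  have chain2 : ∀ k : ℕ, ∀ t y' s : ℝ, t ∈ Set.Icc (0:ℝ) 1 → y' ∈ Set.Icc (0:ℝ) 1 →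
      s ∈ Set.Icc (0:ℝ) 1 → |t - y'| ≤ (k : ℝ) * δ₂ → |f s t - f s y'| ≤ (k : ℝ) * ω := by
    intro k
    induction k with
    | zero =>
      intro t y' s _ _ _ h
      have : t = y' := by
        have h0 : |t - y'| = 0 := le_antisymm (by simpa using h) (abs_nonneg _)
        linarith [sub_eq_zero.mp (abs_eq_zero.mp h0)]
      simp [this]
    | succ k ih =>
      intro t y' s ht hy' hs h
      set c : ℝ := (k : ℝ) / ((k : ℝ) + 1) with hc
      have hk1 : (0:ℝ) < (k : ℝ) + 1 := by positivity
      have hc0 : 0 ≤ c := by positivity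
      have hc1 : c ≤ 1 := by rw [hc, div_le_one hk1]; linarith
      set t'' := y' + c * (t - y') with ht''
      have ht''mem : t'' ∈ Set.Icc (0:ℝ) 1 := by
        constructor
        · nlinarith [mul_nonneg (sub_nonneg.mpr hc1) hy'.1, mul_nonneg hc0 ht.1]
        · nlinarith [mul_nonneg (sub_nonneg.mpr hc1) (sub_nonneg.mpr hy'.2),
            mul_nonneg hc0 (sub_nonneg.mpr ht.2)]
      have habs : |t - y'| ≤ ((k:ℝ) + 1) * δ₂ := by push_cast at h; linarith
      have hstep : |t - t''| ≤ δ₂ := by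
        have he : t - t'' = (t - y') / ((k:ℝ) + 1) := by
          rw [ht'', hc]; field_simp; ring
        rw [he, abs_div, abs_of_pos hk1, div_le_iff₀ hk1]
        linarith
      have hih : |t'' - y'| ≤ (k:ℝ) * δ₂ := by
        have he : t'' - y' = c * (t - y') := by rw [ht'']; ring
        rw [he, abs_mul, abs_of_nonneg hc0, hc]
        rw [div_mul_eq_mul_div, div_le_iff₀ hk1]
        calc (k:ℝ) * |t - y'| ≤ (k:ℝ) * (((k:ℝ)+1) * δ₂) :=
          mul_le_mul_of_nonneg_left habs (Nat.cast_nonneg k)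
        _ = (k:ℝ) * δ₂ * ((k:ℝ)+1) := by ring
      have e1 : |f s t - f s t''| ≤ ω :=
        bivMod_step hBdd hs ht hs ht''mem (by simp [hδ₁0]) hstep
      have e2 : |f s t'' - f s y'| ≤ (k:ℝ) * ω := ih t'' y' s ht''mem hy' hs hih
      calc |f s t - f s y'| ≤ |f s t - f s t''| + |f s t'' - f s y'| := abs_sub_le _ _ _
        _ ≤ ω + (k:ℝ) * ω := add_le_add e1 e2
        _ = ((k+1 : ℕ):ℝ) * ω := by push_cast; ring
  have pair : ∀ (k₁ k₂ : ℕ) (s t : ℝ), s ∈ Set.Icc (0:ℝ) 1 → t ∈ Set.Icc (0:ℝ) 1 →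
      |s - x| ≤ (k₁ : ℝ) * δ₁ → |t - y| ≤ (k₂ : ℝ) * δ₂ →
      |f s t - f x y| ≤ ((k₁ : ℝ) + (k₂ : ℝ)) * ω := by
    intro k₁ k₂ s t hs ht h1 h2
    calc |f s t - f x y| ≤ |f s t - f x t| + |f x t - f x y| := abs_sub_le _ _ _
      _ ≤ (k₁:ℝ) * ω + (k₂:ℝ) * ω :=
        add_le_add (chain1 k₁ s x t hs hx ht h1) (chain2 k₂ t y x ht hy hx h2)
      _ = ((k₁:ℝ) + (k₂:ℝ)) * ω := by ring
  -- ceiling counts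
  set K₁ : ℕ → ℕ := fun i => if δ₁ = 0 then 0 else ⌈|((i:ℝ) / (n:ℝ)) - x| / δ₁⌉₊ with hK₁
  set K₂ : ℕ → ℕ := fun j => if δ₂ = 0 then 0 else ⌈|((j:ℝ) / (m:ℝ)) - y| / δ₂⌉₊ with hK₂
  have hK₁a : ∀ i ∈ Finset.range (n+1), bez n lam x i ≠ 0 →
      |(i:ℝ) / (n:ℝ) - x| ≤ (K₁ i : ℝ) * δ₁ := by
    intro i hi hbz
    rcases eq_or_ne δ₁ 0 with h0 | h0
    · simp only [hK₁, if_pos h0, Nat.cast_zero, zero_mul]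
      have hzero : lB n lam (fun s => (s - x) ^ 2) x = 0 := by
        rw [← hδ₁sq, h0]; ring
      have := (Finset.sum_eq_zero_iff_of_nonneg (fun i hi =>
        mul_nonneg (sq_nonneg _)
          (bez_nonneg hn hl1 hl2 hx.1 hx.2 (Nat.lt_succ_iff.mp (Finset.mem_range.mp hi))))).mp
        hzero i hi
      rcases mul_eq_zero.mp this with h | h
      · have : (i:ℝ)/(n:ℝ) - x = 0 := by
          exact pow_eq_zero_iff (by norm_num) |>.mp h
        rw [this, abs_zero]
      · exact absurd h hbz
    · simp only [hK₁, if_neg h0]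
      have hpos : 0 < δ₁ := lt_of_le_of_ne hδ₁0 (Ne.symm h0)
      have := Nat.le_ceil (|(i:ℝ) / (n:ℝ) - x| / δ₁)
      calc |(i:ℝ)/(n:ℝ) - x| = (|(i:ℝ)/(n:ℝ) - x| / δ₁) * δ₁ := by field_simp
        _ ≤ (⌈|(i:ℝ)/(n:ℝ) - x| / δ₁⌉₊ : ℝ) * δ₁ := mul_le_mul_of_nonneg_right this hδ₁0
  have hK₂a : ∀ j ∈ Finset.range (m+1), bez m lam y j ≠ 0 →
      |(j:ℝ) / (m:ℝ) - y| ≤ (K₂ j : ℝ) * δ₂ := by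
    intro j hj hbz
    rcases eq_or_ne δ₂ 0 with h0 | h0
    · simp only [hK₂, if_pos h0, Nat.cast_zero, zero_mul]
      have hzero : lB m lam (fun t => (t - y) ^ 2) y = 0 := by
        rw [← hδ₂sq, h0]; ring
      have := (Finset.sum_eq_zero_iff_of_nonneg (fun j hj =>
        mul_nonneg (sq_nonneg _)
          (bez_nonneg hm hl1 hl2 hy.1 hy.2 (Nat.lt_succ_iff.mp (Finset.mem_range.mp hj))))).mp
        hzero j hj
      rcases mul_eq_zero.mp this with h | h
      · have : (j:ℝ)/(m:ℝ) - y = 0 := pow_eq_zero_iff (by norm_num) |>.mp h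
        rw [this, abs_zero]
      · exact absurd h hbz
    · simp only [hK₂, if_neg h0]
      have hpos : 0 < δ₂ := lt_of_le_of_ne hδ₂0 (Ne.symm h0)
      have := Nat.le_ceil (|(j:ℝ) / (m:ℝ) - y| / δ₂)
      calc |(j:ℝ)/(m:ℝ) - y| = (|(j:ℝ)/(m:ℝ) - y| / δ₂) * δ₂ := by field_simp
        _ ≤ (⌈|(j:ℝ)/(m:ℝ) - y| / δ₂⌉₊ : ℝ) * δ₂ := mul_le_mul_of_nonneg_right this hδ₂0
  -- the weighted ceiling sums are at most 2
  have hK₁b : ∑ i ∈ Finset.range (n+1), (K₁ i : ℝ) * bez n lam x i ≤ 2 := by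
    rcases eq_or_ne δ₁ 0 with h0 | h0
    · simp [hK₁, h0]
    · have hpos : 0 < δ₁ := lt_of_le_of_ne hδ₁0 (Ne.symm h0)
      have hterm : ∀ i ∈ Finset.range (n+1), (K₁ i : ℝ) * bez n lam x i ≤
          (1 + ((i:ℝ)/(n:ℝ) - x)^2 / δ₁^2) * bez n lam x i := by
        intro i hi
        apply mul_le_mul_of_nonneg_right _
          (bez_nonneg hn hl1 hl2 hx.1 hx.2 (Nat.lt_succ_iff.mp (Finset.mem_range.mp hi)))
        simp only [hK₁, if_neg h0]
        set z := |(i:ℝ)/(n:ℝ) - x| / δ₁ with hz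
        have hz0 : 0 ≤ z := by positivity
        have hzsq : z^2 = ((i:ℝ)/(n:ℝ) - x)^2 / δ₁^2 := by
          rw [hz, div_pow, sq_abs]
        rw [← hzsq]
        rcases le_or_gt z 1 with h | h
        · have : ⌈z⌉₊ ≤ 1 := Nat.ceil_le.mpr (by exact_mod_cast h)
          have : (⌈z⌉₊ : ℝ) ≤ 1 := by exact_mod_cast this
          nlinarith [sq_nonneg z]
        · have := Nat.ceil_lt_add_one hz0
          nlinarith
      calc ∑ i ∈ Finset.range (n+1), (K₁ i : ℝ) * bez n lam x i
          ≤ ∑ i ∈ Finset.range (n+1), (1 + ((i:ℝ)/(n:ℝ) - x)^2 / δ₁^2) * bez n lam x i :=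
            Finset.sum_le_sum hterm
        _ = (∑ i ∈ Finset.range (n+1), bez n lam x i)
            + (∑ i ∈ Finset.range (n+1), ((i:ℝ)/(n:ℝ) - x)^2 * bez n lam x i) / δ₁^2 := by
            rw [Finset.sum_div, ← Finset.sum_add_distrib]
            apply Finset.sum_congr rfl
            intro i _
            ring
        _ = 1 + (lB n lam (fun s => (s - x)^2) x) / δ₁^2 := by rw [bez_sum hn lam x]; rfl
        _ = 2 := by
            rw [← hδ₁sq, div_self (pow_ne_zero _ h0)]; norm_num
  have hK₂b : ∑ j ∈ Finset.range (m+1), (K₂ j : ℝ) * bez m lam y j ≤ 2 := by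
    rcases eq_or_ne δ₂ 0 with h0 | h0
    · simp [hK₂, h0]
    · have hpos : 0 < δ₂ := lt_of_le_of_ne hδ₂0 (Ne.symm h0)
      have hterm : ∀ j ∈ Finset.range (m+1), (K₂ j : ℝ) * bez m lam y j ≤
          (1 + ((j:ℝ)/(m:ℝ) - y)^2 / δ₂^2) * bez m lam y j := by
        intro j hj
        apply mul_le_mul_of_nonneg_right _
          (bez_nonneg hm hl1 hl2 hy.1 hy.2 (Nat.lt_succ_iff.mp (Finset.mem_range.mp hj)))
        simp only [hK₂, if_neg h0]
        set z := |(j:ℝ)/(m:ℝ) - y| / δ₂ with hz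
        have hz0 : 0 ≤ z := by positivity
        have hzsq : z^2 = ((j:ℝ)/(m:ℝ) - y)^2 / δ₂^2 := by
          rw [hz, div_pow, sq_abs]
        rw [← hzsq]
        rcases le_or_gt z 1 with h | h
        · have : ⌈z⌉₊ ≤ 1 := Nat.ceil_le.mpr (by exact_mod_cast h)
          have : (⌈z⌉₊ : ℝ) ≤ 1 := by exact_mod_cast this
          nlinarith [sq_nonneg z]
        · have := Nat.ceil_lt_add_one hz0
          nlinarith
      calc ∑ j ∈ Finset.range (m+1), (K₂ j : ℝ) * bez m lam y j
          ≤ ∑ j ∈ Finset.range (m+1), (1 + ((j:ℝ)/(m:ℝ) - y)^2 / δ₂^2) * bez m lam y j :=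
            Finset.sum_le_sum hterm
        _ = (∑ j ∈ Finset.range (m+1), bez m lam y j)
            + (∑ j ∈ Finset.range (m+1), ((j:ℝ)/(m:ℝ) - y)^2 * bez m lam y j) / δ₂^2 := by
            rw [Finset.sum_div, ← Finset.sum_add_distrib]
            apply Finset.sum_congr rfl
            intro j _
            ring
        _ = 1 + (lB m lam (fun t => (t - y)^2) y) / δ₂^2 := by rw [bez_sum hm lam y]; rfl
        _ = 2 := by
            rw [← hδ₂sq, div_self (pow_ne_zero _ h0)]; norm_num
  -- expansion of the error
  have hwx : ∀ i ∈ Finset.range (n+1), 0 ≤ bez n lam x i := fun i hi =>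
    bez_nonneg hn hl1 hl2 hx.1 hx.2 (Nat.lt_succ_iff.mp (Finset.mem_range.mp hi))
  have hwy : ∀ j ∈ Finset.range (m+1), 0 ≤ bez m lam y j := fun j hj =>
    bez_nonneg hm hl1 hl2 hy.1 hy.2 (Nat.lt_succ_iff.mp (Finset.mem_range.mp hj))
  have hdouble : ∑ i ∈ Finset.range (n+1), ∑ j ∈ Finset.range (m+1),
      bez n lam x i * bez m lam y j = 1 := by
    rw [← Finset.sum_mul_sum, bez_sum hn lam x, bez_sum hm lam y, mul_one]
  have expand : bivB n m lam f x y - f x y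
      = ∑ i ∈ Finset.range (n+1), ∑ j ∈ Finset.range (m+1),
          (f ((i:ℝ)/(n:ℝ)) ((j:ℝ)/(m:ℝ)) - f x y) * (bez n lam x i * bez m lam y j) := by
    have h1 : f x y = f x y * ∑ i ∈ Finset.range (n+1), ∑ j ∈ Finset.range (m+1),
        bez n lam x i * bez m lam y j := by rw [hdouble, mul_one]
    rw [bivB]
    conv_lhs => rw [h1]
    rw [Finset.mul_sum, ← Finset.sum_sub_distrib]
    apply Finset.sum_congr rfl
    intro i _
    rw [Finset.mul_sum, ← Finset.sum_sub_distrib]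
    apply Finset.sum_congr rfl
    intro j _
    ring
  have hstep2 : |bivB n m lam f x y - f x y| ≤
      ∑ i ∈ Finset.range (n+1), ∑ j ∈ Finset.range (m+1),
        |f ((i:ℝ)/(n:ℝ)) ((j:ℝ)/(m:ℝ)) - f x y| * (bez n lam x i * bez m lam y j) := by
    rw [expand]
    refine (Finset.abs_sum_le_sum_abs _ _).trans ?_
    apply Finset.sum_le_sum
    intro i hi
    refine (Finset.abs_sum_le_sum_abs _ _).trans ?_
    apply Finset.sum_le_sum
    intro j hj
    rw [abs_mul, abs_of_nonneg (mul_nonneg (hwx i hi) (hwy j hj))]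
  have hstep3 : ∑ i ∈ Finset.range (n+1), ∑ j ∈ Finset.range (m+1),
        |f ((i:ℝ)/(n:ℝ)) ((j:ℝ)/(m:ℝ)) - f x y| * (bez n lam x i * bez m lam y j) ≤
      ∑ i ∈ Finset.range (n+1), ∑ j ∈ Finset.range (m+1),
        ((K₁ i : ℝ) + (K₂ j : ℝ)) * ω * (bez n lam x i * bez m lam y j) := by
    apply Finset.sum_le_sum
    intro i hi
    apply Finset.sum_le_sum
    intro j hj
    rcases eq_or_ne (bez n lam x i * bez m lam y j) 0 with h | h
    · rw [h, mul_zero, mul_zero]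
    · have hbi : bez n lam x i ≠ 0 := fun hc => h (by rw [hc, zero_mul])
      have hbj : bez m lam y j ≠ 0 := fun hc => h (by rw [hc, mul_zero])
      have hnpos : (0:ℝ) < (n:ℝ) := by positivity
      have hmpos : (0:ℝ) < (m:ℝ) := by positivity
      have hmemi : (i:ℝ)/(n:ℝ) ∈ Set.Icc (0:ℝ) 1 := by
        constructor
        · positivity
        · rw [div_le_one hnpos]
          exact_mod_cast Nat.lt_succ_iff.mp (Finset.mem_range.mp hi)
      have hmemj : (j:ℝ)/(m:ℝ) ∈ Set.Icc (0:ℝ) 1 := by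
        constructor
        · positivity
        · rw [div_le_one hmpos]
          exact_mod_cast Nat.lt_succ_iff.mp (Finset.mem_range.mp hj)
      exact mul_le_mul_of_nonneg_right
        (pair (K₁ i) (K₂ j) _ _ hmemi hmemj (hK₁a i hi hbi) (hK₂a j hj hbj))
        (mul_nonneg (hwx i hi) (hwy j hj))
  have hstep4 : ∑ i ∈ Finset.range (n+1), ∑ j ∈ Finset.range (m+1),
        ((K₁ i : ℝ) + (K₂ j : ℝ)) * ω * (bez n lam x i * bez m lam y j)
      = ω * (∑ i ∈ Finset.range (n+1), (K₁ i : ℝ) * bez n lam x i)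
        + ω * (∑ j ∈ Finset.range (m+1), (K₂ j : ℝ) * bez m lam y j) := by
    have e : ∀ i ∈ Finset.range (n+1), ∑ j ∈ Finset.range (m+1),
        ((K₁ i : ℝ) + (K₂ j : ℝ)) * ω * (bez n lam x i * bez m lam y j)
        = (ω * ((K₁ i : ℝ) * bez n lam x i))
          + bez n lam x i * (ω * (∑ j ∈ Finset.range (m+1), (K₂ j : ℝ) * bez m lam y j)) := by
      intro i _
      have e2 : ∀ j ∈ Finset.range (m+1),
          ((K₁ i : ℝ) + (K₂ j : ℝ)) * ω * (bez n lam x i * bez m lam y j)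
          = (ω * ((K₁ i : ℝ) * bez n lam x i)) * bez m lam y j
            + (ω * bez n lam x i) * ((K₂ j : ℝ) * bez m lam y j) := fun j _ => by ring
      rw [Finset.sum_congr rfl e2, Finset.sum_add_distrib, ← Finset.mul_sum, ← Finset.mul_sum,
        bez_sum hm lam y, mul_one]
      ring
    rw [Finset.sum_congr rfl e, Finset.sum_add_distrib, ← Finset.mul_sum, ← Finset.sum_mul,
      bez_sum hn lam x, one_mul]
  have hfinal : ∑ i ∈ Finset.range (n+1), ∑ j ∈ Finset.range (m+1),
        ((K₁ i : ℝ) + (K₂ j : ℝ)) * ω * (bez n lam x i * bez m lam y j) ≤ 4 * ω := by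
    rw [hstep4]
    nlinarith [mul_le_mul_of_nonneg_left hK₁b hω0, mul_le_mul_of_nonneg_left hK₂b hω0]
  calc |bivB n m lam f x y - f x y| ≤ _ := hstep2
    _ ≤ _ := hstep3
    _ ≤ 4 * ω := hfinal
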